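/- arXiv:2312.06603 — 9 statements merged into one kernel-verified Lean document; each statement's English description precedes it below -/
import Mathlib

section
/- Let n ≥ 3 and let v₀, …, v_{n−1} be points of the Euclidean plane in general position (pairwise distinct, no three collinear), forming the closed polygon with segments sᵢ = [vᵢ, v_{(i+1) mod n}]. Then the set of crossing points of the polygon — points of the plane lying on two non-adjacent segments sᵢ and sⱼ (indices with j ≢ i, i±1 (mod n)) — is finite, and its cardinality is at most n(n−3)/2. -/
/-!
Two distinct points common to segments `[vᵢ, vᵢ₊₁]` and `[vⱼ, vⱼ₊₁]` span a line containing
both segments, so `vᵢ, vⱼ, vⱼ₊₁` would be collinear. Hence two non-adjacent sides meet in at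
most one point, and the crossing points are covered by one point per edge of the complement of
the cycle graph `Cₙ`. That graph is `(n - 3)`-regular, so by the handshake lemma it has
`n(n - 3)/2` edges.
-/

open Finset

section Segments

variable {k V : Type*} [Field k] [LinearOrder k] [IsStrictOrderedRing k]
  [AddCommGroup V] [Module k V]

theorem segment_inter_subsingleton_of_not_collinear {a b c d : V}
    (h : ¬ Collinear k ({a, c, d} : Set V)) :
    (segment k a b ∩ segment k c d).Subsingleton := by
  intro p ⟨hpab, hpcd⟩ q ⟨hqab, hqcd⟩
  by_contra hpq
  have hab : Collinear k ({p, q, a, b} : Set V) :=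
    collinear_insert_insert_of_mem_affineSpan_pair
      (mem_segment_iff_wbtw.1 hpab).mem_affineSpan (mem_segment_iff_wbtw.1 hqab).mem_affineSpan
  have hcd : Collinear k ({p, q, c, d} : Set V) :=
    collinear_insert_insert_of_mem_affineSpan_pair
      (mem_segment_iff_wbtw.1 hpcd).mem_affineSpan (mem_segment_iff_wbtw.1 hqcd).mem_affineSpan
  have ha : a ∈ line[k, p, q] := hab.mem_affineSpan_of_mem_of_ne (by simp) (by simp) (by simp) hpq
  have hc : c ∈ line[k, p, q] := hcd.mem_affineSpan_of_mem_of_ne (by simp) (by simp) (by simp) hpq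
  have hd : d ∈ line[k, p, q] := hcd.mem_affineSpan_of_mem_of_ne (by simp) (by simp) (by simp) hpq
  exact h (collinear_triple_of_mem_affineSpan_pair ha hc hd)

end Segments

namespace SimpleGraph

theorem compl_cycleGraph_adj {n : ℕ} [NeZero n] {i j : Fin n} :
    (cycleGraph n)ᶜ.Adj i j ↔ j ≠ i ∧ j ≠ i + 1 ∧ i ≠ j + 1 := by
  obtain _ | _ | n := n
  · exact i.elim0
  · obtain rfl := Subsingleton.elim (α := Fin 1) i j
    simp
  · rw [compl_adj, cycleGraph_adj, sub_eq_iff_eq_add', sub_eq_iff_eq_add', ne_comm]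
    tauto

theorem card_edgeFinset_compl_cycleGraph {n : ℕ} (hn : 3 ≤ n) :
    #(cycleGraph n)ᶜ.edgeFinset = n * (n - 3) / 2 := by
  obtain ⟨n, rfl⟩ := Nat.exists_eq_add_of_le' hn
  have hdeg : ∀ v, (cycleGraph (n + 3))ᶜ.degree v = n := fun v => by
    rw [degree_compl, cycleGraph_degree_three_le, Fintype.card_fin]
    omega
  have handshake := sum_degrees_eq_twice_card_edges (cycleGraph (n + 3))ᶜ
  simp only [hdeg, sum_const, card_univ, Fintype.card_fin, smul_eq_mul] at handshake
  rw [Nat.add_sub_cancel]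
  omega

variable {V α : Type*} [Fintype V] (G : SimpleGraph V) [DecidableRel G.Adj]

theorem setOf_adj_inter_eq_biUnion (T : V → Set α) :
    {p | ∃ i j, G.Adj i j ∧ p ∈ T i ∧ p ∈ T j} =
      ⋃ e ∈ G.edgeFinset, {p | ∀ i ∈ e, p ∈ T i} := by
  ext p
  simp only [Set.mem_ofPred_eq, Set.mem_iUnion, mem_edgeFinset, exists_prop, Sym2.exists]
  simp only [mem_edgeSet, Sym2.mem_iff, forall_eq_or_imp, forall_eq]

theorem setOf_adj_inter_finite_and_ncard_le (T : V → Set α)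
    (hT : ∀ i j, G.Adj i j → (T i ∩ T j).Subsingleton) :
    {p | ∃ i j, G.Adj i j ∧ p ∈ T i ∧ p ∈ T j}.Finite ∧
      {p | ∃ i j, G.Adj i j ∧ p ∈ T i ∧ p ∈ T j}.ncard ≤ #G.edgeFinset := by
  have hsub : ∀ e ∈ G.edgeFinset, {p | ∀ i ∈ e, p ∈ T i}.Subsingleton := by
    intro e he
    induction e using Sym2.ind with
    | h i j =>
      simp only [Sym2.mem_iff, forall_eq_or_imp, forall_eq]
      exact hT i j (mem_edgeFinset.1 he)
  rw [setOf_adj_inter_eq_biUnion]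
  refine ⟨G.edgeFinset.finite_toSet.biUnion fun e he => (hsub e he).finite, ?_⟩
  calc _ ≤ ∑ e ∈ G.edgeFinset, {p | ∀ i ∈ e, p ∈ T i}.ncard := set_ncard_biUnion_le _ _
    _ ≤ ∑ _e ∈ G.edgeFinset, 1 :=
      sum_le_sum fun e he => (Set.ncard_le_one (hsub e he).finite).2 (hsub e he)
    _ = #G.edgeFinset := (card_eq_sum_ones _).symm

end SimpleGraph

open SimpleGraph in
theorem polygon_crossing_points_finite_card_le_general
    (n : ℕ) [NeZero n] (hn : 3 ≤ n) (v : Fin n → EuclideanSpace ℝ (Fin 2))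
    (hcol : ∀ i j k : Fin n, i ≠ j → j ≠ k → i ≠ k →
      ¬ Collinear ℝ ({v i, v j, v k} : Set (EuclideanSpace ℝ (Fin 2)))) :
    ({p : EuclideanSpace ℝ (Fin 2) | ∃ i j : Fin n,
        j ≠ i ∧ j ≠ i + 1 ∧ i ≠ j + 1 ∧
        p ∈ segment ℝ (v i) (v (i + 1)) ∧ p ∈ segment ℝ (v j) (v (j + 1))}).Finite ∧
    ({p : EuclideanSpace ℝ (Fin 2) | ∃ i j : Fin n,
        j ≠ i ∧ j ≠ i + 1 ∧ i ≠ j + 1 ∧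
        p ∈ segment ℝ (v i) (v (i + 1)) ∧ p ∈ segment ℝ (v j) (v (j + 1))}).ncard
      ≤ n * (n - 3) / 2 := by
  have hsucc (j : Fin n) : j ≠ j + 1 := by
    rw [ne_eq, left_eq_add, Fin.ext_iff, Fin.val_one', Nat.mod_eq_of_lt (by omega)]
    simp
  have hcross : ∀ i j, (cycleGraph n)ᶜ.Adj i j →
      (segment ℝ (v i) (v (i + 1)) ∩ segment ℝ (v j) (v (j + 1))).Subsingleton := by
    intro i j hij
    obtain ⟨hji, -, hij1⟩ := compl_cycleGraph_adj.1 hij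
    exact segment_inter_subsingleton_of_not_collinear (hcol i j (j + 1) hji.symm (hsucc j) hij1)
  simpa only [compl_cycleGraph_adj, and_assoc, card_edgeFinset_compl_cycleGraph hn] using
    setOf_adj_inter_finite_and_ncard_le (cycleGraph n)ᶜ _ hcross

/-- The crossing points of a closed polygon on `n ≥ 3` points in general position in the
Euclidean plane form a finite set of cardinality at most `n(n-3)/2`. -/
theorem polygon_crossing_points_finite_card_le
    (n : ℕ) [NeZero n] (hn : 3 ≤ n) (v : Fin n → EuclideanSpace ℝ (Fin 2))
    (hdist : ∀ i j : Fin n, i ≠ j → v i ≠ v j)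
    (hcol : ∀ i j k : Fin n, i ≠ j → j ≠ k → i ≠ k →
      ¬ Collinear ℝ ({v i, v j, v k} : Set (EuclideanSpace ℝ (Fin 2)))) :
    ({p : EuclideanSpace ℝ (Fin 2) | ∃ i j : Fin n,
        j ≠ i ∧ j ≠ i + 1 ∧ i ≠ j + 1 ∧
        p ∈ segment ℝ (v i) (v (i + 1)) ∧ p ∈ segment ℝ (v j) (v (j + 1))}).Finite ∧
    ({p : EuclideanSpace ℝ (Fin 2) | ∃ i j : Fin n,
        j ≠ i ∧ j ≠ i + 1 ∧ i ≠ j + 1 ∧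
        p ∈ segment ℝ (v i) (v (i + 1)) ∧ p ∈ segment ℝ (v j) (v (j + 1))}).ncard
      ≤ n * (n - 3) / 2 :=
  polygon_crossing_points_finite_card_le_general n hn v hcol
end

section
/- Let n ≥ 1 and consider n nondegenerate segments in the Euclidean plane, the i-th segment being sᵢ = [uᵢ, wᵢ] with uᵢ ≠ wᵢ, such that the finite set of all endpoints {uᵢ, wᵢ : i} contains no three collinear points. Call two distinct segments adjacent if they share an endpoint, and for each i let dᵢ be the number of segments j ≠ i adjacent to segment i. Then the set of crossing points — points of the plane lying on two distinct non-adjacent segments — is finite, and twice its cardinality is at most Σᵢ (n − 1 − dᵢ). -/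
/-!
Two non-adjacent segments meet in at most one point: two common points would put both
segments on one line, and with it three distinct endpoints. So each unordered pair of
distinct non-adjacent segments contributes at most one crossing point, while
`Σᵢ (n - 1 - dᵢ)` counts the ordered such pairs, i.e. twice the unordered ones.
-/

open Set

section Geometry

variable {k E : Type*} [Field k] [LinearOrder k] [IsStrictOrderedRing k]
  [AddCommGroup E] [Module k E]

theorem mem_affineSpan_pair_of_mem_segment {a b p : E} (h : p ∈ segment k a b) :
    p ∈ line[k, a, b] :=
  (mem_segment_iff_wbtw.1 h).mem_affineSpan

theorem segment_inter_segment_subsingleton {a b c d : E} (h : ¬ Collinear k {a, b, c}) :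
    (segment k a b ∩ segment k c d).Subsingleton := by
  rintro p ⟨hpab, hpcd⟩ q ⟨hqab, hqcd⟩
  by_contra hpq
  have hab : Collinear k {p, q, a, b} := collinear_insert_insert_of_mem_affineSpan_pair
    (mem_affineSpan_pair_of_mem_segment hpab) (mem_affineSpan_pair_of_mem_segment hqab)
  have hcd : Collinear k {p, q, c, d} := collinear_insert_insert_of_mem_affineSpan_pair
    (mem_affineSpan_pair_of_mem_segment hpcd) (mem_affineSpan_pair_of_mem_segment hqcd)
  exact h <| collinear_triple_of_mem_affineSpan_pair
    (hab.mem_affineSpan_of_mem_of_ne (by simp) (by simp) (by simp) hpq)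
    (hab.mem_affineSpan_of_mem_of_ne (by simp) (by simp) (by simp) hpq)
    (hcd.mem_affineSpan_of_mem_of_ne (by simp) (by simp) (by simp) hpq)

end Geometry

theorem Set.ncard_le_ncard_of_subset_biUnion {ι α : Type*} {X : Set α} {t : Set ι}
    {s : ι → Set α} (ht : t.Finite) (hs : ∀ i ∈ t, (s i).Subsingleton)
    (hX : X ⊆ ⋃ i ∈ t, s i) : X.ncard ≤ t.ncard := by
  rw [← ht.coe_toFinset] at hs hX
  calc X.ncard ≤ (⋃ i ∈ ht.toFinset, s i).ncard :=
        ncard_le_ncard hX (ht.toFinset.finite_toSet.biUnion fun i hi => (hs i hi).finite)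
    _ ≤ ∑ i ∈ ht.toFinset, (s i).ncard := ht.toFinset.set_ncard_biUnion_le s
    _ ≤ ∑ _i ∈ ht.toFinset, 1 :=
        Finset.sum_le_sum fun i hi => (ncard_le_one (hs i hi).finite).2 (hs i hi)
    _ = t.ncard := by simp [ncard_eq_toFinset_card t ht]

section Crossing

variable {ι α : Type*} (A : ι → Set α) (R : ι → ι → Prop)

def crossingSet : Set α := {p | ∃ i j, i ≠ j ∧ R i j ∧ p ∈ A i ∧ p ∈ A j}

variable {A R}

theorem crossingSet_subset_biUnion {r : ι → ι → Prop}
    (hr : ∀ i j, i ≠ j → R i j → r i j ∨ r j i) :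
    crossingSet A R ⊆ ⋃ q ∈ {q : ι × ι | r q.1 q.2}, A q.1 ∩ A q.2 := by
  rintro p ⟨i, j, hij, hRij, hi, hj⟩
  rw [mem_iUnion₂]
  rcases hr i j hij hRij with h | h
  · exact ⟨(i, j), h, hi, hj⟩
  · exact ⟨(j, i), h, hj, hi⟩

variable [Finite ι]

theorem crossingSet_finite (hA : ∀ i j, i ≠ j → R i j → (A i ∩ A j).Subsingleton) :
    (crossingSet A R).Finite :=
  have hcover := crossingSet_subset_biUnion (r := fun i j => i ≠ j ∧ R i j)
    fun _ _ hij h => .inl ⟨hij, h⟩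
  ((toFinite _).biUnion fun _ hq => (hA _ _ hq.1 hq.2).finite).subset hcover

theorem two_mul_ncard_crossingSet_le (hA : ∀ i j, i ≠ j → R i j → (A i ∩ A j).Subsingleton)
    (hR : ∀ i j, R i j → R j i) :
    2 * (crossingSet A R).ncard ≤ {q : ι × ι | q.1 ≠ q.2 ∧ R q.1 q.2}.ncard := by
  classical
  -- With respect to any linear order, both the pairs with `i < j` and those with `j < i`
  -- already index a cover of the crossing set.
  let : LinearOrder ι := linearOrderOfSTO WellOrderingRel
  have hlt : (crossingSet A R).ncard ≤ {q : ι × ι | q.1 < q.2 ∧ R q.1 q.2}.ncard :=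
    ncard_le_ncard_of_subset_biUnion (toFinite _) (fun q hq => hA _ _ hq.1.ne hq.2)
      (crossingSet_subset_biUnion (r := fun i j => i < j ∧ R i j) fun i j hij h =>
        (lt_or_gt_of_ne hij).imp (⟨·, h⟩) (⟨·, hR i j h⟩))
  have hgt : (crossingSet A R).ncard ≤ {q : ι × ι | q.2 < q.1 ∧ R q.1 q.2}.ncard :=
    ncard_le_ncard_of_subset_biUnion (toFinite _) (fun q hq => hA _ _ hq.1.ne' hq.2)
      (crossingSet_subset_biUnion (r := fun i j => j < i ∧ R i j) fun i j hij h =>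
        (lt_or_gt_of_ne hij).symm.imp (⟨·, h⟩) (⟨·, hR i j h⟩))
  have hsplit : {q : ι × ι | q.1 ≠ q.2 ∧ R q.1 q.2} =
      {q : ι × ι | q.1 < q.2 ∧ R q.1 q.2} ∪ {q : ι × ι | q.2 < q.1 ∧ R q.1 q.2} := by
    ext q
    simp only [mem_ofPred_eq, mem_union, ne_iff_lt_or_gt, or_and_right]
  rw [hsplit, ncard_union_eq _ (toFinite _) (toFinite _)]
  · omega
  · exact disjoint_left.2 fun q h h' => h.1.asymm h'.1

end Crossing

theorem ncard_setOf_prod_eq_sum {ι : Type*} [Fintype ι] (P : ι → ι → Prop) :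
    {q : ι × ι | P q.1 q.2}.ncard = ∑ i, {j | P i j}.ncard := by
  classical
  simp only [ncard_eq_toFinset_card', toFinset_ofPred, Finset.card_filter, Fintype.sum_prod_type]

theorem ncard_setOf_ne_and_not {ι : Type*} [Fintype ι] (i : ι) (P : ι → Prop) :
    {j | j ≠ i ∧ ¬ P j}.ncard = Fintype.card ι - 1 - {j | j ≠ i ∧ P j}.ncard := by
  classical
  have h := Finset.card_filter_add_card_filter_not (s := Finset.univ.filter (· ≠ i)) P
  rw [Finset.filter_filter, Finset.filter_filter, Finset.filter_ne', Finset.card_erase_of_mem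
    (Finset.mem_univ i), Finset.card_univ] at h
  simp only [ncard_eq_toFinset_card', toFinset_ofPred]
  omega

theorem crossing_points_le_sum_general (n : ℕ)
    (u w : Fin n → EuclideanSpace ℝ (Fin 2))
    (hcol : ∀ p q r : EuclideanSpace ℝ (Fin 2),
      p ∈ Set.range u ∪ Set.range w → q ∈ Set.range u ∪ Set.range w →
      r ∈ Set.range u ∪ Set.range w → p ≠ q → q ≠ r → p ≠ r →
      ¬ Collinear ℝ ({p, q, r} : Set (EuclideanSpace ℝ (Fin 2)))) :
    ({p : EuclideanSpace ℝ (Fin 2) | ∃ i j : Fin n, i ≠ j ∧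
        ¬ (u i = u j ∨ u i = w j ∨ w i = u j ∨ w i = w j) ∧
        p ∈ segment ℝ (u i) (w i) ∧ p ∈ segment ℝ (u j) (w j)}).Finite ∧
    2 * ({p : EuclideanSpace ℝ (Fin 2) | ∃ i j : Fin n, i ≠ j ∧
        ¬ (u i = u j ∨ u i = w j ∨ w i = u j ∨ w i = w j) ∧
        p ∈ segment ℝ (u i) (w i) ∧ p ∈ segment ℝ (u j) (w j)}).ncard
      ≤ ∑ i : Fin n, (n - 1 -
        ({j : Fin n | j ≠ i ∧
          (u i = u j ∨ u i = w j ∨ w i = u j ∨ w i = w j)}).ncard) := by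
  set adj : Fin n → Fin n → Prop := fun i j => u i = u j ∨ u i = w j ∨ w i = u j ∨ w i = w j
  have hsymm : ∀ i j, ¬ adj i j → ¬ adj j i := by
    intro i j h h'
    exact h (by rcases h' with h' | h' | h' | h' <;> simp only [adj, h', true_or, or_true])
  have hcross : ∀ i j, i ≠ j → ¬ adj i j →
      (segment ℝ (u i) (w i) ∩ segment ℝ (u j) (w j)).Subsingleton := by
    intro i j _ hij
    simp only [adj, not_or] at hij
    obtain ⟨huu, -, hwu, -⟩ := hij
    rcases eq_or_ne (u i) (w i) with hdeg | hnd
    · simp [hdeg, Set.subsingleton_singleton.anti]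
    · exact segment_inter_segment_subsingleton <| hcol _ _ _ (.inl ⟨i, rfl⟩) (.inr ⟨i, rfl⟩)
        (.inl ⟨j, rfl⟩) hnd hwu huu
  refine ⟨crossingSet_finite hcross, (two_mul_ncard_crossingSet_le hcross hsymm).trans_eq <|
    (ncard_setOf_prod_eq_sum fun i j => i ≠ j ∧ ¬ adj i j).trans <|
      Finset.sum_congr rfl fun i _ => ?_⟩
  simp_rw [ne_comm (a := i)]
  simpa only [Fintype.card_fin] using ncard_setOf_ne_and_not i (adj i)

/-- For `n ≥ 1` nondegenerate segments in the plane whose endpoint set contains no three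
collinear points, with `dᵢ` the number of other segments adjacent to (sharing an endpoint
with) the `i`-th segment, the set of crossing points of pairs of distinct non-adjacent
segments is finite and twice its cardinality is at most `Σᵢ (n - 1 - dᵢ)`. -/
theorem crossing_points_le_sum (n : ℕ) (hn : 1 ≤ n)
    (u w : Fin n → EuclideanSpace ℝ (Fin 2))
    (hnd : ∀ i, u i ≠ w i)
    (hcol : ∀ p q r : EuclideanSpace ℝ (Fin 2),
      p ∈ Set.range u ∪ Set.range w → q ∈ Set.range u ∪ Set.range w →
      r ∈ Set.range u ∪ Set.range w → p ≠ q → q ≠ r → p ≠ r →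
      ¬ Collinear ℝ ({p, q, r} : Set (EuclideanSpace ℝ (Fin 2)))) :
    ({p : EuclideanSpace ℝ (Fin 2) | ∃ i j : Fin n, i ≠ j ∧
        ¬ (u i = u j ∨ u i = w j ∨ w i = u j ∨ w i = w j) ∧
        p ∈ segment ℝ (u i) (w i) ∧ p ∈ segment ℝ (u j) (w j)}).Finite ∧
    2 * ({p : EuclideanSpace ℝ (Fin 2) | ∃ i j : Fin n, i ≠ j ∧
        ¬ (u i = u j ∨ u i = w j ∨ w i = u j ∨ w i = w j) ∧
        p ∈ segment ℝ (u i) (w i) ∧ p ∈ segment ℝ (u j) (w j)}).ncard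
      ≤ ∑ i : Fin n, (n - 1 -
        ({j : Fin n | j ≠ i ∧
          (u i = u j ∨ u i = w j ∨ w i = u j ∨ w i = w j)}).ncard) :=
  crossing_points_le_sum_general n u w hcol
end

section
/- Let x, a, b, c, d, e be six points of the Euclidean plane in general position (pairwise distinct, no three collinear), and consider the seven segments of the bouquet configuration consisting of the triangle loop [x,a], [a,b], [b,x] and the quadrilateral loop [x,c], [c,d], [d,e], [e,x]. Then the number of crossing pairs — unordered pairs of two of these seven segments that share no endpoint and have nonempty intersection — is at most 7. -/
/-- The closed segment spanned by a pair of points of the Euclidean plane. -/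
def segOf (p : EuclideanSpace ℝ (Fin 2) × EuclideanSpace ℝ (Fin 2)) :
    Set (EuclideanSpace ℝ (Fin 2)) :=
  segment ℝ p.1 p.2

/-- Two segments (given by their endpoint pairs) share an endpoint. -/
def SharesEndpoint (p q : EuclideanSpace ℝ (Fin 2) × EuclideanSpace ℝ (Fin 2)) : Prop :=
  p.1 = q.1 ∨ p.1 = q.2 ∨ p.2 = q.1 ∨ p.2 = q.2

/-! A stick [q,r] that meets the segment [u,v], with q and r off the line uv, has its endpoints
on opposite sides of that line: `orient u v q` and `orient u v r` have opposite signs. Hence a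
segment cannot cross all three sides of a triangle (the product of the three sign changes would
be negative, while it is a square), and a quadrilateral cannot have both pairs of opposite sides
crossing. Applied to the sticks [c,d] and [d,e] against the triangle x a b and to the
quadrilateral x c d e, this removes three of the ten non-adjacent pairs of sticks. -/

open Set

local notation "ℝ²" => EuclideanSpace ℝ (Fin 2)

def orient (p q r : ℝ²) : ℝ :=
  (q 0 - p 0) * (r 1 - p 1) - (q 1 - p 1) * (r 0 - p 0)

theorem orient_smul_add_smul (u v q r : ℝ²) {s t : ℝ} (hst : s + t = 1) :
    orient u v (s • q + t • r) = s * orient u v q + t * orient u v r := by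
  obtain rfl : t = 1 - s := by linarith
  simp only [orient, PiLp.add_apply, PiLp.smul_apply, smul_eq_mul]
  ring

theorem orient_eq_zero_of_mem_segment {u v p : ℝ²} (hp : p ∈ segment ℝ u v) :
    orient u v p = 0 := by
  obtain ⟨s, t, -, -, hst, rfl⟩ := hp
  rw [orient_smul_add_smul u v u v hst]
  simp only [orient]
  ring

theorem orient_mul_orient_neg_of_segment_inter {u v q r : ℝ²}
    (h : (segment ℝ u v ∩ segment ℝ q r).Nonempty)
    (hq : orient u v q ≠ 0) (hr : orient u v r ≠ 0) :
    orient u v q * orient u v r < 0 := by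
  obtain ⟨p, hpuv, s, t, hs, ht, hst, rfl⟩ := h
  have h0 := orient_eq_zero_of_mem_segment hpuv
  rw [orient_smul_add_smul u v q r hst] at h0
  by_contra! hpos
  have hsq : s * orient u v q ^ 2 + t * (orient u v q * orient u v r) = 0 := by
    linear_combination orient u v q * h0
  have hs0 : s * orient u v q ^ 2 = 0 := by
    nlinarith [mul_nonneg hs (sq_nonneg (orient u v q)), mul_nonneg ht hpos]
  obtain rfl : s = 0 := by simpa [hq] using hs0
  obtain rfl : t = 1 := by linarith
  simp [hr] at h0

theorem orient_ne_zero_of_not_collinear {p q r : ℝ²} (h : ¬Collinear ℝ ({p, q, r} : Set ℝ²)) :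
    orient p q r ≠ 0 := by
  intro h0
  apply h
  rcases eq_or_ne q p with rfl | hqp
  · simpa using collinear_pair ℝ q r
  have hv : (q 0 - p 0) ^ 2 + (q 1 - p 1) ^ 2 ≠ 0 := by
    contrapose! hqp
    ext i
    fin_cases i <;> simp <;> nlinarith [sq_nonneg (q 0 - p 0), sq_nonneg (q 1 - p 1)]
  rw [collinear_iff_of_mem (mem_insert p _)]
  refine ⟨q - p, ?_⟩
  simp only [mem_insert_iff, mem_singleton_iff]
  rintro w (rfl | rfl | rfl)
  · exact ⟨0, by simp⟩
  · exact ⟨1, by simp⟩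
  -- the coefficient of the projection of w - p onto q - p; `orient p q w = 0` makes it exact
  · refine ⟨((w 0 - p 0) * (q 0 - p 0) + (w 1 - p 1) * (q 1 - p 1)) /
      ((q 0 - p 0) ^ 2 + (q 1 - p 1) ^ 2), ?_⟩
    unfold orient at h0
    ext i
    fin_cases i <;> simp <;> field_simp
    · linear_combination -(q 1 - p 1) * h0
    · linear_combination (q 0 - p 0) * h0

theorem not_segment_inter_all_triangle_sides {u v x a b : ℝ²}
    (hx : ¬Collinear ℝ ({u, v, x} : Set ℝ²)) (ha : ¬Collinear ℝ ({u, v, a} : Set ℝ²))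
    (hb : ¬Collinear ℝ ({u, v, b} : Set ℝ²)) :
    ¬((segment ℝ x a ∩ segment ℝ u v).Nonempty ∧ (segment ℝ a b ∩ segment ℝ u v).Nonempty ∧
      (segment ℝ b x ∩ segment ℝ u v).Nonempty) := by
  rintro ⟨hxa, hab, hbx⟩
  have hX := orient_ne_zero_of_not_collinear hx
  have hA := orient_ne_zero_of_not_collinear ha
  have hB := orient_ne_zero_of_not_collinear hb
  have sxa := orient_mul_orient_neg_of_segment_inter (inter_comm _ _ ▸ hxa) hX hA
  have sab := orient_mul_orient_neg_of_segment_inter (inter_comm _ _ ▸ hab) hA hB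
  have sbx := orient_mul_orient_neg_of_segment_inter (inter_comm _ _ ▸ hbx) hB hX
  nlinarith [mul_pos_of_neg_of_neg sxa sab, sq_nonneg (orient u v x * orient u v a * orient u v b)]

theorem not_quadrilateral_opposite_sides_inter {x c d e : ℝ²}
    (hxcd : ¬Collinear ℝ ({x, c, d} : Set ℝ²)) (hxce : ¬Collinear ℝ ({x, c, e} : Set ℝ²))
    (hxde : ¬Collinear ℝ ({x, d, e} : Set ℝ²)) (hcde : ¬Collinear ℝ ({c, d, e} : Set ℝ²)) :
    ¬((segment ℝ x c ∩ segment ℝ d e).Nonempty ∧ (segment ℝ c d ∩ segment ℝ e x).Nonempty) := by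
  rintro ⟨hxc_de, hcd_ex⟩
  have hP := orient_ne_zero_of_not_collinear hxcd
  have hQ := orient_ne_zero_of_not_collinear hxce
  have hR := orient_ne_zero_of_not_collinear hxde
  have hS := orient_ne_zero_of_not_collinear hcde
  have hcdx : orient c d x = orient x c d := by unfold orient; ring
  have hexc : orient e x c = orient x c e := by unfold orient; ring
  have hexd : orient e x d = orient x d e := by unfold orient; ring
  -- expanding the orientation of c d e around the fourth point x
  have hcde_eq : orient c d e = orient x c d - orient x c e + orient x d e := by
    unfold orient; ring
  have sPQ := orient_mul_orient_neg_of_segment_inter hxc_de hP hQ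
  have sSP := orient_mul_orient_neg_of_segment_inter hcd_ex hS (by rwa [hcdx])
  have sQR := orient_mul_orient_neg_of_segment_inter (inter_comm _ _ ▸ hcd_ex)
    (by rwa [hexc]) (by rwa [hexd])
  rw [hcdx, hcde_eq] at sSP
  rw [hexc, hexd] at sQR
  have hPR : 0 < orient x c d * orient x d e := by
    nlinarith [mul_pos_of_neg_of_neg sPQ sQR, sq_nonneg (orient x c e)]
  nlinarith [sq_nonneg (orient x c d)]

theorem Set.ncard_add_three_le_of_subset {α : Type*} [DecidableEq α] {T : Set α} {C : Finset α}
    {a b c : α} (hT : T ⊆ C) (ha : a ∉ T) (hb : b ∉ T) (hc : c ∉ T)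
    (habc : {a, b, c} ⊆ C) (hcard : ({a, b, c} : Finset α).card = 3) :
    T.ncard + 3 ≤ C.card := by
  have hsub : T ⊆ ↑(C \ {a, b, c}) := by
    intro y hy
    simp only [Finset.coe_sdiff, Finset.coe_insert, Finset.coe_singleton, mem_sdiff,
      mem_insert_iff, mem_singleton_iff]
    exact ⟨hT hy, by rintro (rfl | rfl | rfl) <;> contradiction⟩
  have hT_le : T.ncard ≤ (C \ {a, b, c}).card :=
    (Set.ncard_le_ncard hsub).trans_eq (Set.ncard_coe_finset _)
  have hsplit := Finset.card_sdiff_add_card_eq_card habc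
  omega

def crossingPairs {n : ℕ} (s : Fin n → ℝ² × ℝ²) : Set (Fin n × Fin n) :=
  {p | p.1 < p.2 ∧ ¬SharesEndpoint (s p.1) (s p.2) ∧ (segOf (s p.1) ∩ segOf (s p.2)).Nonempty}

def bouquet (x a b c d e : ℝ²) : Fin 7 → ℝ² × ℝ² :=
  ![(x, a), (a, b), (b, x), (x, c), (c, d), (d, e), (e, x)]

def bouquetNonadjacentPairs : Finset (Fin 7 × Fin 7) :=
  {(0, 4), (0, 5), (1, 3), (1, 4), (1, 5), (1, 6), (2, 4), (2, 5), (3, 5), (4, 6)}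

theorem crossingPairs_bouquet_subset (x a b c d e : ℝ²) :
    crossingPairs (bouquet x a b c d e) ⊆ bouquetNonadjacentPairs := by
  rintro ⟨i, j⟩ ⟨hij, hshare, -⟩
  fin_cases i <;> fin_cases j <;> simp_all [SharesEndpoint, bouquet, bouquetNonadjacentPairs]

theorem bouquet_seven_sticks_crossings_le_seven_general
    (x a b c d e : EuclideanSpace ℝ (Fin 2))
    (hcol : ∀ i j k : Fin 6, i ≠ j → j ≠ k → i ≠ k →
      ¬ Collinear ℝ ({![x, a, b, c, d, e] i, ![x, a, b, c, d, e] j,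
        ![x, a, b, c, d, e] k} : Set (EuclideanSpace ℝ (Fin 2)))) :
    ({p : Fin 7 × Fin 7 | p.1 < p.2 ∧
        ¬ SharesEndpoint (![(x, a), (a, b), (b, x), (x, c), (c, d), (d, e), (e, x)] p.1)
          (![(x, a), (a, b), (b, x), (x, c), (c, d), (d, e), (e, x)] p.2) ∧
        (segOf (![(x, a), (a, b), (b, x), (x, c), (c, d), (d, e), (e, x)] p.1) ∩
          segOf (![(x, a), (a, b), (b, x), (x, c), (c, d), (d, e), (e, x)] p.2)).Nonempty}).ncard
      ≤ 7 := by
  change (crossingPairs (bouquet x a b c d e)).ncard ≤ 7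
  set T := crossingPairs (bouquet x a b c d e)
  have hcd : (0, 4) ∉ T ∨ (1, 4) ∉ T ∨ (2, 4) ∉ T := by
    by_contra! ⟨⟨-, -, hxa⟩, ⟨-, -, hab⟩, ⟨-, -, hbx⟩⟩
    exact not_segment_inter_all_triangle_sides (by apply hcol 3 4 0 <;> decide)
      (by apply hcol 3 4 1 <;> decide)
      (by apply hcol 3 4 2 <;> decide) ⟨hxa, hab, hbx⟩
  have hde : (0, 5) ∉ T ∨ (1, 5) ∉ T ∨ (2, 5) ∉ T := by
    by_contra! ⟨⟨-, -, hxa⟩, ⟨-, -, hab⟩, ⟨-, -, hbx⟩⟩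
    exact not_segment_inter_all_triangle_sides (by apply hcol 4 5 0 <;> decide)
      (by apply hcol 4 5 1 <;> decide)
      (by apply hcol 4 5 2 <;> decide) ⟨hxa, hab, hbx⟩
  have hquad : (3, 5) ∉ T ∨ (4, 6) ∉ T := by
    by_contra! ⟨⟨-, -, hxc_de⟩, ⟨-, -, hcd_ex⟩⟩
    exact not_quadrilateral_opposite_sides_inter (by apply hcol 0 3 4 <;> decide)
      (by apply hcol 0 3 5 <;> decide)
      (by apply hcol 0 4 5 <;> decide)
      (by apply hcol 3 4 5 <;> decide) ⟨hxc_de, hcd_ex⟩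
  have hsub : T ⊆ bouquetNonadjacentPairs := crossingPairs_bouquet_subset x a b c d e
  have hcard : bouquetNonadjacentPairs.card = 10 := rfl
  rcases hcd with h₁ | h₁ | h₁ <;> rcases hde with h₂ | h₂ | h₂ <;> rcases hquad with h₃ | h₃ <;>
  · have := Set.ncard_add_three_le_of_subset hsub h₁ h₂ h₃ (by decide) (by decide)
    omega

/-- For six points `x, a, b, c, d, e` in general position in the plane, the seven segments of
the bouquet configuration (triangle loop `[x,a], [a,b], [b,x]` and quadrilateral loop
`[x,c], [c,d], [d,e], [e,x]`) have at most 7 crossing pairs: unordered pairs of segments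
sharing no endpoint and having nonempty intersection. -/
theorem bouquet_seven_sticks_crossings_le_seven
    (x a b c d e : EuclideanSpace ℝ (Fin 2))
    (hdist : ∀ i j : Fin 6, i ≠ j → ![x, a, b, c, d, e] i ≠ ![x, a, b, c, d, e] j)
    (hcol : ∀ i j k : Fin 6, i ≠ j → j ≠ k → i ≠ k →
      ¬ Collinear ℝ ({![x, a, b, c, d, e] i, ![x, a, b, c, d, e] j,
        ![x, a, b, c, d, e] k} : Set (EuclideanSpace ℝ (Fin 2)))) :
    ({p : Fin 7 × Fin 7 | p.1 < p.2 ∧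
        ¬ SharesEndpoint (![(x, a), (a, b), (b, x), (x, c), (c, d), (d, e), (e, x)] p.1)
          (![(x, a), (a, b), (b, x), (x, c), (c, d), (d, e), (e, x)] p.2) ∧
        (segOf (![(x, a), (a, b), (b, x), (x, c), (c, d), (d, e), (e, x)] p.1) ∩
          segOf (![(x, a), (a, b), (b, x), (x, c), (c, d), (d, e), (e, x)] p.2)).Nonempty}).ncard
      ≤ 7 :=
  bouquet_seven_sticks_crossings_le_seven_general x a b c d e hcol
end

section
/- Let x, a, b, c, d be five points of the Euclidean plane in general position (pairwise distinct, no three collinear), and consider the six segments of the bouquet configuration consisting of the two triangle loops [x,a], [a,b], [b,x] and [x,c], [c,d], [d,x]. Then the number of crossing pairs — unordered pairs of two of these six segments that share no endpoint and have nonempty intersection — is at most 3. -/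
/-!
Among the six sticks only five pairs are non-adjacent: `[a,b]` against each of `[x,c]`, `[c,d]`,
`[d,x]`, and `[c,d]` against `[x,a]` and `[b,x]`. If `[a,b]` crosses both `[x,c]` and `[d,x]`, then
`c` and `d` lie strictly on the side of the line `ab` opposite to `x`, hence so does all of
`[c,d]`, while `[x,a]` and `[b,x]` stay on the closed side of `x`; so neither of them meets
`[c,d]`. The same holds with the two triangles exchanged, so at most two of the four pairs other
than `([a,b],[c,d])` cross.
-/

section Sides

variable {𝕜 V P : Type*} [Field 𝕜] [LinearOrder 𝕜] [IsStrictOrderedRing 𝕜]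
  [AddCommGroup V] [Module 𝕜 V] [AddTorsor V P]

open AffineMap in
theorem AffineSubspace.SSameSide.sSameSide_of_wbtw {s : AffineSubspace 𝕜 P} {x y z : P}
    (hxz : s.SSameSide x z) (h : Wbtw 𝕜 x y z) : s.SSameSide x y := by
  refine ⟨?_, hxz.2.1, fun hy => hxz.not_wOppSide (h.wOppSide₁₃ hy)⟩
  obtain ⟨p₁, hp₁, p₂, hp₂, hray⟩ := hxz.1
  obtain ⟨t, ⟨ht₀, ht₁⟩, rfl⟩ := h
  -- `y -ᵥ lineMap p₁ p₂ t` is a nonnegative combination of `x -ᵥ p₁` and `z -ᵥ p₂`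
  refine ⟨p₁, hp₁, lineMap p₁ p₂ t, lineMap_mem t hp₁ hp₂, ?_⟩
  rw [lineMap_vsub_lineMap, lineMap_apply_module]
  exact ((SameRay.refl _).nonneg_smul_right (sub_nonneg.2 ht₁)).add_right
    (hray.nonneg_smul_right ht₀)

end Sides

section Segments

variable {𝕜 E : Type*} [Field 𝕜] [LinearOrder 𝕜] [IsStrictOrderedRing 𝕜]
  [AddCommGroup E] [Module 𝕜 E]

open AffineSubspace

theorem AffineSubspace.sOppSide_of_mem_segment {s : AffineSubspace 𝕜 E} {x y p : E}
    (hx : x ∉ s) (hy : y ∉ s) (hp : p ∈ s) (hpxy : p ∈ segment 𝕜 x y) : s.SOppSide x y :=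
  ⟨(mem_segment_iff_wbtw.1 hpxy).wOppSide₁₃ hp, hx, hy⟩

theorem disjoint_segment_of_sOppSide {s : AffineSubspace 𝕜 E} {x a c d : E} (ha : a ∈ s)
    (hc : s.SOppSide x c) (hd : s.SOppSide x d) : Disjoint (segment 𝕜 c d) (segment 𝕜 x a) := by
  refine Set.disjoint_left.2 fun p hpcd hpxa => ?_
  have hcp : s.SSameSide c p :=
    (hc.symm.trans hd).sSameSide_of_wbtw (mem_segment_iff_wbtw.1 hpcd)
  exact ((mem_segment_iff_wbtw.1 hpxa).wSameSide₁₂ ha).not_sOppSide (hc.trans_sSameSide hcp)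

theorem sOppSide_of_segment_inter_nonempty {x a b c : E} (hx : x ∉ line[𝕜, a, b])
    (hc : c ∉ line[𝕜, a, b]) (h : (segment 𝕜 a b ∩ segment 𝕜 x c).Nonempty) :
    line[𝕜, a, b].SOppSide x c := by
  obtain ⟨p, hpab, hpxc⟩ := h
  exact sOppSide_of_mem_segment hx hc (mem_segment_iff_wbtw.1 hpab).mem_affineSpan hpxc

theorem bouquet_segments_disjoint {x a b c d : E} (hx : x ∉ line[𝕜, a, b])
    (hc : c ∉ line[𝕜, a, b]) (hd : d ∉ line[𝕜, a, b])
    (hac : (segment 𝕜 a b ∩ segment 𝕜 x c).Nonempty)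
    (had : (segment 𝕜 a b ∩ segment 𝕜 d x).Nonempty) :
    ¬(segment 𝕜 x a ∩ segment 𝕜 c d).Nonempty ∧ ¬(segment 𝕜 b x ∩ segment 𝕜 c d).Nonempty := by
  rw [segment_symm 𝕜 d x] at had
  have hxc := sOppSide_of_segment_inter_nonempty hx hc hac
  have hxd := sOppSide_of_segment_inter_nonempty hx hd had
  rw [segment_symm 𝕜 b x]
  exact ⟨fun h => Set.not_disjoint_iff_nonempty_inter.2 h
      (disjoint_segment_of_sOppSide (left_mem_affineSpan_pair 𝕜 a b) hxc hxd).symm,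
    fun h => Set.not_disjoint_iff_nonempty_inter.2 h
      (disjoint_segment_of_sOppSide (right_mem_affineSpan_pair 𝕜 a b) hxc hxd).symm⟩

end Segments

theorem Finset.card_filter_le_two_of_exclusive {α : Type*} [DecidableEq α] (P : α → Prop)
    [DecidablePred P] {u₁ u₂ v₁ v₂ : α} (hu : P u₁ → P u₂ → ¬P v₁ ∧ ¬P v₂)
    (hv : P v₁ → P v₂ → ¬P u₁ ∧ ¬P u₂) :
    (({u₁, u₂, v₁, v₂} : Finset α).filter P).card ≤ 2 := by
  by_cases h₁ : P u₁ <;> by_cases h₂ : P u₂ <;> by_cases h₃ : P v₁ <;> by_cases h₄ : P v₂ <;>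
    simp_all [Finset.filter_insert, Finset.filter_singleton, Finset.card_le_two]

theorem bouquet_six_sticks_crossings_le_three_general
    (x a b c d : EuclideanSpace ℝ (Fin 2))
    (hcol : ∀ i j k : Fin 5, i ≠ j → j ≠ k → i ≠ k →
      ¬ Collinear ℝ ({![x, a, b, c, d] i, ![x, a, b, c, d] j,
        ![x, a, b, c, d] k} : Set (EuclideanSpace ℝ (Fin 2)))) :
    ({p : Fin 6 × Fin 6 | p.1 < p.2 ∧
        ¬ SharesEndpoint (![(x, a), (a, b), (b, x), (x, c), (c, d), (d, x)] p.1)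
          (![(x, a), (a, b), (b, x), (x, c), (c, d), (d, x)] p.2) ∧
        (segOf (![(x, a), (a, b), (b, x), (x, c), (c, d), (d, x)] p.1) ∩
          segOf (![(x, a), (a, b), (b, x), (x, c), (c, d), (d, x)] p.2)).Nonempty}).ncard
      ≤ 3 := by
  classical
  set sticks := ![(x, a), (a, b), (b, x), (x, c), (c, d), (d, x)]
  set Crosses : Fin 6 × Fin 6 → Prop := fun p => (segOf (sticks p.1) ∩ segOf (sticks p.2)).Nonempty
  have off (i j k : Fin 5) (h : i ≠ j ∧ j ≠ k ∧ i ≠ k := by decide) :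
      ![x, a, b, c, d] i ∉ line[ℝ, ![x, a, b, c, d] j, ![x, a, b, c, d] k] :=
    fun hp => hcol i j k h.1 h.2.1 h.2.2 (collinear_insert_of_mem_affineSpan_pair hp)
  have hab := bouquet_segments_disjoint (off 0 1 2) (off 3 1 2) (off 4 1 2)
  have hcd := bouquet_segments_disjoint (off 0 3 4) (off 1 3 4) (off 2 3 4)
  have hfour : (({(1, 3), (1, 5), (0, 4), (2, 4)} : Finset _).filter Crosses).card ≤ 2 := by
    refine Finset.card_filter_le_two_of_exclusive Crosses hab fun h₁ h₂ => ?_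
    obtain ⟨h₃, h₄⟩ := hcd (by rwa [Set.inter_comm]) (by rwa [Set.inter_comm])
    rw [Set.inter_comm] at h₃ h₄
    exact ⟨h₃, h₄⟩
  have hsub : {p : Fin 6 × Fin 6 | p.1 < p.2 ∧ ¬SharesEndpoint (sticks p.1) (sticks p.2) ∧
      Crosses p} ⊆ ↑(insert (1, 4) (({(1, 3), (1, 5), (0, 4), (2, 4)} : Finset _).filter Crosses)) := by
    rintro ⟨i, j⟩ ⟨hij, hshare, hcross⟩
    fin_cases i <;> fin_cases j <;> simp_all [SharesEndpoint, sticks, Crosses]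
  calc _ ≤ _ := Set.ncard_le_ncard hsub (Finset.finite_toSet _)
    _ = _ := Set.ncard_coe_finset _
    _ ≤ _ := Finset.card_insert_le _ _
    _ ≤ 3 := by omega

/-- For five points `x, a, b, c, d` in general position in the plane, the six segments of
the bouquet configuration (two triangle loops `[x,a], [a,b], [b,x]` and
`[x,c], [c,d], [d,x]`) have at most 3 crossing pairs: unordered pairs of segments
sharing no endpoint and having nonempty intersection. -/
theorem bouquet_six_sticks_crossings_le_three
    (x a b c d : EuclideanSpace ℝ (Fin 2))
    (hdist : ∀ i j : Fin 5, i ≠ j → ![x, a, b, c, d] i ≠ ![x, a, b, c, d] j)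
    (hcol : ∀ i j k : Fin 5, i ≠ j → j ≠ k → i ≠ k →
      ¬ Collinear ℝ ({![x, a, b, c, d] i, ![x, a, b, c, d] j,
        ![x, a, b, c, d] k} : Set (EuclideanSpace ℝ (Fin 2)))) :
    ({p : Fin 6 × Fin 6 | p.1 < p.2 ∧
        ¬ SharesEndpoint (![(x, a), (a, b), (b, x), (x, c), (c, d), (d, x)] p.1)
          (![(x, a), (a, b), (b, x), (x, c), (c, d), (d, x)] p.2) ∧
        (segOf (![(x, a), (a, b), (b, x), (x, c), (c, d), (d, x)] p.1) ∩
          segOf (![(x, a), (a, b), (b, x), (x, c), (c, d), (d, x)] p.2)).Nonempty}).ncard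
      ≤ 3 :=
  bouquet_six_sticks_crossings_le_three_general x a b c d hcol
end

section
/- There exist five points v₀, …, v₄ of the Euclidean plane in general position (pairwise distinct, no three collinear) such that in the closed polygon with segments sᵢ = [vᵢ, v_{(i+1) mod 5}], every pair of non-adjacent segments (indices with j ≢ i, i±1 (mod 5)) has nonempty intersection; that is, the polygon attains all 5 = 5·(5−3)/2 possible crossings. -/
/-!
The vertices `(0,0), (7,4), (-1,4), (6,0), (3,8)` form a pentagram. Two segments `[a,b]`, `[c,d]`
cross as soon as the line through each strictly separates the endpoints of the other, a sign
condition on orientation determinants; for these integer vertices, general position and all the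
separations are finite integer computations.
-/

open Set

local notation "ℝ²" => EuclideanSpace ℝ (Fin 2)

section OrderedField

variable {𝕜 : Type*} [Field 𝕜] [LinearOrder 𝕜] [IsStrictOrderedRing 𝕜]

theorem sub_ne_zero_of_mul_neg {x y : 𝕜} (h : x * y < 0) : x - y ≠ 0 := by
  rcases mul_neg_iff.1 h with ⟨hx, hy⟩ | ⟨hx, hy⟩ <;> intro <;> linarith

theorem div_sub_mem_Icc_of_mul_neg {x y : 𝕜} (h : x * y < 0) : x / (x - y) ∈ Icc (0 : 𝕜) 1 := by
  rcases mul_neg_iff.1 h with ⟨hx, hy⟩ | ⟨hx, hy⟩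
  · exact ⟨div_nonneg hx.le (by linarith), (div_le_one (by linarith)).2 (by linarith)⟩
  · exact ⟨div_nonneg_of_nonpos hx.le (by linarith),
      (div_le_one_of_neg (by linarith)).2 (by linarith)⟩

end OrderedField

/-- Twice the signed area of the triangle `abc`. -/
def cross (a b c : ℝ²) : ℝ :=
  (b 0 - a 0) * (c 1 - a 1) - (b 1 - a 1) * (c 0 - a 0)

theorem cross_eq_zero_of_collinear {a b c : ℝ²} (h : Collinear ℝ ({a, b, c} : Set ℝ²)) :
    cross a b c = 0 := by
  obtain ⟨w, hw⟩ := (collinear_iff_of_mem (mem_insert a _)).1 h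
  obtain ⟨r, rfl⟩ := hw b (by simp)
  obtain ⟨s, rfl⟩ := hw c (by simp)
  simp only [cross, vadd_eq_add, PiLp.add_apply, PiLp.smul_apply, smul_eq_mul]
  ring

theorem segment_inter_nonempty_of_cross_mul_neg {a b c d : ℝ²}
    (hab : cross a b c * cross a b d < 0) (hcd : cross c d a * cross c d b < 0) :
    (segment ℝ a b ∩ segment ℝ c d).Nonempty := by
  -- `cross c d` is affine, so along `[a, b]` it vanishes at the parameter below, and symmetrically.
  have hsame : AffineMap.lineMap a b (cross c d a / (cross c d a - cross c d b)) =
      AffineMap.lineMap c d (cross a b c / (cross a b c - cross a b d)) := by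
    have h₁ := sub_ne_zero_of_mul_neg hcd
    have h₂ := sub_ne_zero_of_mul_neg hab
    simp only [cross] at h₁ h₂ ⊢
    ext i
    fin_cases i <;>
    · simp only [Fin.zero_eta, Fin.mk_one, AffineMap.lineMap_apply_module', PiLp.add_apply,
        PiLp.smul_apply, PiLp.sub_apply, smul_eq_mul]
      field_simp
      ring
  exact ⟨_, lineMap_mem_segment ℝ a b (div_sub_mem_Icc_of_mul_neg hcd),
    hsame ▸ lineMap_mem_segment ℝ c d (div_sub_mem_Icc_of_mul_neg hab)⟩

def crossInt (a b c : ℤ × ℤ) : ℤ :=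
  (b.1 - a.1) * (c.2 - a.2) - (b.2 - a.2) * (c.1 - a.1)

noncomputable def intPoint (p : ℤ × ℤ) : ℝ² := !₂[p.1, p.2]

theorem intPoint_injective : Function.Injective intPoint := by
  intro p q h
  have h₀ := congrArg (· 0) h
  have h₁ := congrArg (· 1) h
  simp only [intPoint, PiLp.toLp_apply, Matrix.cons_val_zero, Matrix.cons_val_one,
    Int.cast_inj] at h₀ h₁
  exact Prod.ext h₀ h₁

theorem cross_intPoint (a b c : ℤ × ℤ) :
    cross (intPoint a) (intPoint b) (intPoint c) = crossInt a b c := by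
  simp [cross, crossInt, intPoint]

def pentagramInt : Fin 5 → ℤ × ℤ := ![(0, 0), (7, 4), (-1, 4), (6, 0), (3, 8)]

theorem pentagramInt_injective : Function.Injective pentagramInt := by
  decide

theorem crossInt_pentagramInt_ne_zero :
    ∀ i j k : Fin 5, i ≠ j → j ≠ k → i ≠ k →
      crossInt (pentagramInt i) (pentagramInt j) (pentagramInt k) ≠ 0 := by
  decide

theorem pentagramInt_sides_separate :
    ∀ i : Fin 5,
      crossInt (pentagramInt i) (pentagramInt (i + 1)) (pentagramInt (i + 2)) *
          crossInt (pentagramInt i) (pentagramInt (i + 1)) (pentagramInt (i + 3)) < 0 ∧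
        crossInt (pentagramInt (i + 2)) (pentagramInt (i + 3)) (pentagramInt i) *
          crossInt (pentagramInt (i + 2)) (pentagramInt (i + 3)) (pentagramInt (i + 1)) < 0 := by
  decide

noncomputable def pentagram (i : Fin 5) : ℝ² := intPoint (pentagramInt i)

theorem pentagram_segment_inter_nonempty (i : Fin 5) :
    (segment ℝ (pentagram i) (pentagram (i + 1)) ∩
      segment ℝ (pentagram (i + 2)) (pentagram (i + 3))).Nonempty := by
  obtain ⟨h₁, h₂⟩ := pentagramInt_sides_separate i
  refine segment_inter_nonempty_of_cross_mul_neg ?_ ?_ <;>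
    simp only [pentagram, cross_intPoint]
  exacts [mod_cast h₁, mod_cast h₂]

theorem fin_five_eq_add_two_or_eq_add_two {i j : Fin 5} (h₀ : j ≠ i) (h₁ : j ≠ i + 1)
    (h₂ : i ≠ j + 1) : j = i + 2 ∨ i = j + 2 := by
  revert i j; decide

/-- There exist five points in general position in the plane whose closed polygon attains
all `5·(5−3)/2 = 5` possible crossings: every pair of non-adjacent sides intersects. -/
theorem exists_pentagon_all_crossings :
    ∃ v : Fin 5 → EuclideanSpace ℝ (Fin 2),
      (∀ i j : Fin 5, i ≠ j → v i ≠ v j) ∧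
      (∀ i j k : Fin 5, i ≠ j → j ≠ k → i ≠ k →
        ¬ Collinear ℝ ({v i, v j, v k} : Set (EuclideanSpace ℝ (Fin 2)))) ∧
      (∀ i j : Fin 5, j ≠ i → j ≠ i + 1 → i ≠ j + 1 →
        (segment ℝ (v i) (v (i + 1)) ∩ segment ℝ (v j) (v (j + 1))).Nonempty) := by
  refine ⟨pentagram, fun i j hij => (intPoint_injective.comp pentagramInt_injective).ne hij,
    fun i j k hij hjk hik hcol => ?_, fun i j h₀ h₁ h₂ => ?_⟩
  · have hcross := cross_eq_zero_of_collinear hcol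
    rw [pentagram, pentagram, pentagram, cross_intPoint, Int.cast_eq_zero] at hcross
    exact crossInt_pentagramInt_ne_zero i j k hij hjk hik hcross
  · rcases fin_five_eq_add_two_or_eq_add_two h₀ h₁ h₂ with rfl | rfl
    · simpa only [add_assoc, Fin.reduceAdd] using pentagram_segment_inter_nonempty i
    · simpa only [inter_comm, add_assoc, Fin.reduceAdd] using pentagram_segment_inter_nonempty j
end

section
/- Let a, b, c be three affinely independent points of the Euclidean plane and let T = convexHull ℝ {a,b,c} be the triangle they span. If v lies in the interior of T and w does not lie in T, then the closed segment [v,w] meets the frontier of T in exactly one point: there exists a unique z with z ∈ [v,w] and z ∈ frontier T. -/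
/-!
The segment `[v, w]` is connected and meets both `T` (at `v`) and its complement (at `w`), so it
meets `frontier T`. Conversely, if `v` is an interior point of a convex set `s` and
`z ∈ closure s`, every point of `[v, z)` lies in `interior s`; since any two points of `[v, w]` are
ordered along the segment starting from `v`, at most one of them can lie on `frontier s`.
-/

open Set

theorem IsPreconnected.inter_frontier_nonempty {X : Type*} [TopologicalSpace X] {s t : Set X}
    (hs : IsPreconnected s) (hst : (s ∩ t).Nonempty) (hst' : (s \ t).Nonempty) :
    (s ∩ frontier t).Nonempty := by
  by_contra hne
  have hcover : s ⊆ interior t ∪ (closure t)ᶜ := fun x hx =>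
    or_iff_not_imp_left.2 fun hxi hxc => hne ⟨x, hx, hxc, hxi⟩
  obtain ⟨x, -, hxi, hxc⟩ := hs _ _ isOpen_interior isClosed_closure.isOpen_compl hcover
    (hst.mono fun x hx => ⟨hx.1, (hcover hx.1).resolve_right (· (subset_closure hx.2))⟩)
    (hst'.mono fun x hx => ⟨hx.1, (hcover hx.1).resolve_left (hx.2 <| interior_subset ·)⟩)
  exact hxc (interior_subset_closure hxi)

theorem Wbtw.wbtw_or_wbtw {R V P : Type*} [Field R] [LinearOrder R] [IsStrictOrderedRing R]
    [AddCommGroup V] [Module R V] [AddTorsor V P] {x y y' z : P}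
    (h : Wbtw R x y z) (h' : Wbtw R x y' z) : Wbtw R x y y' ∨ Wbtw R x y' y := by
  obtain ⟨r, hr, rfl⟩ := h
  obtain ⟨r', hr', rfl⟩ := h'
  simpa only [AffineMap.lineMap_apply] using
    wbtw_or_wbtw_smul_vadd_of_nonneg x (z -ᵥ x) hr.1 hr'.1

namespace Convex

variable {𝕜 E : Type*} [Field 𝕜] [LinearOrder 𝕜] [IsStrictOrderedRing 𝕜]
  [AddCommGroup E] [Module 𝕜 E] [TopologicalSpace E] [IsTopologicalAddGroup E]
  [ContinuousConstSMul 𝕜 E] {s : Set E} {v : E}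

theorem mem_interior_of_mem_segment_of_ne (hs : Convex 𝕜 s) (hv : v ∈ interior s) {y z : E}
    (hz : z ∈ closure s) (hy : y ∈ segment 𝕜 v z) (hyz : y ≠ z) : y ∈ interior s := by
  rcases eq_or_ne v y with rfl | hvy
  · exact hv
  · exact hs.openSegment_interior_closure_subset_interior hv hz
      (mem_openSegment_of_ne_left_right hvy hyz.symm hy)

theorem subsingleton_segment_inter_frontier (hs : Convex 𝕜 s) (hv : v ∈ interior s) (w : E) :
    (segment 𝕜 v w ∩ frontier s).Subsingleton := by
  have key : ∀ z₁ ∈ frontier s, ∀ z₂ ∈ frontier s, z₁ ∈ segment 𝕜 v z₂ → z₁ = z₂ :=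
    fun z₁ hz₁ z₂ hz₂ hz₁₂ => by_contra fun hne =>
      hz₁.2 (hs.mem_interior_of_mem_segment_of_ne hv hz₂.1 hz₁₂ hne)
  rintro z₁ ⟨hz₁w, hz₁⟩ z₂ ⟨hz₂w, hz₂⟩
  rcases (mem_segment_iff_wbtw.1 hz₁w).wbtw_or_wbtw (mem_segment_iff_wbtw.1 hz₂w) with
    h | h
  · exact key z₁ hz₁ z₂ hz₂ h.mem_segment
  · exact (key z₂ hz₂ z₁ hz₁ h.mem_segment).symm

end Convex

theorem Convex.existsUnique_mem_segment_frontier {E : Type*} [AddCommGroup E] [Module ℝ E]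
    [TopologicalSpace E] [IsTopologicalAddGroup E] [ContinuousSMul ℝ E] {s : Set E}
    (hs : Convex ℝ s) {v w : E} (hv : v ∈ interior s) (hw : w ∉ s) :
    ∃! z, z ∈ segment ℝ v w ∧ z ∈ frontier s := by
  obtain ⟨z, hz⟩ := (convex_segment v w).isPreconnected.inter_frontier_nonempty
    ⟨v, left_mem_segment ℝ v w, interior_subset hv⟩ ⟨w, right_mem_segment ℝ v w, hw⟩
  exact ⟨z, hz, fun y hy => hs.subsingleton_segment_inter_frontier hv w hy hz⟩

theorem segment_frontier_unique_of_interior_outside_general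
    (a b c v w : EuclideanSpace ℝ (Fin 2))
    (hv : v ∈ interior (convexHull ℝ ({a, b, c} : Set (EuclideanSpace ℝ (Fin 2)))))
    (hw : w ∉ convexHull ℝ ({a, b, c} : Set (EuclideanSpace ℝ (Fin 2)))) :
    ∃! z : EuclideanSpace ℝ (Fin 2), z ∈ segment ℝ v w ∧
      z ∈ frontier (convexHull ℝ ({a, b, c} : Set (EuclideanSpace ℝ (Fin 2)))) :=
  (convex_convexHull ℝ _).existsUnique_mem_segment_frontier hv hw

/-- If `a, b, c` are affinely independent points of the Euclidean plane spanning the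
triangle `T = convexHull ℝ {a,b,c}`, `v` lies in the interior of `T` and `w` lies outside
`T`, then the closed segment `[v,w]` meets the frontier of `T` in exactly one point. -/
theorem segment_frontier_unique_of_interior_outside
    (a b c v w : EuclideanSpace ℝ (Fin 2)) (h : AffineIndependent ℝ ![a, b, c])
    (hv : v ∈ interior (convexHull ℝ ({a, b, c} : Set (EuclideanSpace ℝ (Fin 2)))))
    (hw : w ∉ convexHull ℝ ({a, b, c} : Set (EuclideanSpace ℝ (Fin 2)))) :
    ∃! z : EuclideanSpace ℝ (Fin 2), z ∈ segment ℝ v w ∧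
      z ∈ frontier (convexHull ℝ ({a, b, c} : Set (EuclideanSpace ℝ (Fin 2)))) :=
  segment_frontier_unique_of_interior_outside_general a b c v w hv hw
end

section
/- Let a, b, c be three affinely independent points of the Euclidean plane and let T = convexHull ℝ {a,b,c} be the triangle they span. If v ∉ T, w ∉ T, and some point x of the closed segment [v,w] lies in the interior of T, then [v,w] meets the frontier of T in at least two points: there exist z₁ ≠ z₂ with z₁, z₂ ∈ [v,w] and z₁, z₂ ∈ frontier T. -/
open Set

private lemma my_inter_frontier_nonempty {X : Type*} [TopologicalSpace X] {s t : Set X}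
    (hs : IsPreconnected s) (h1 : (s ∩ t).Nonempty) (h2 : (s \ t).Nonempty) :
    (s ∩ frontier t).Nonempty := by
  by_contra hcon
  rw [Set.not_nonempty_iff_eq_empty, ← Set.disjoint_iff_inter_eq_empty] at hcon
  have hsub : s ⊆ interior t ∪ (closure t)ᶜ := by
    intro y hy
    have hyf : y ∉ frontier t := fun hf => hcon.le_bot ⟨hy, hf⟩
    by_cases hyc : y ∈ closure t
    · left
      by_contra hyi
      exact hyf ⟨hyc, hyi⟩
    · exact Or.inr hyc
  have hdisj : Disjoint (interior t) (closure t)ᶜ :=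
    Set.disjoint_compl_right_iff_subset.mpr (interior_subset.trans subset_closure)
  rcases hs.subset_or_subset isOpen_interior (isClosed_closure.isOpen_compl) hdisj hsub with
    h | h
  · obtain ⟨y, hy⟩ := h2
    exact hy.2 (interior_subset (h hy.1))
  · obtain ⟨y, hy⟩ := h1
    exact h hy.1 (subset_closure hy.2)

private lemma my_seg_inter {E : Type*} [AddCommGroup E] [Module ℝ E] [NoZeroSMulDivisors ℝ E]
    {v w x z : E} (hx : x ∈ segment ℝ v w) (h1 : z ∈ segment ℝ v x) (h2 : z ∈ segment ℝ x w) :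
    z = x := by
  rw [segment_eq_image] at hx h1 h2
  obtain ⟨t, ⟨ht0, ht1⟩, rfl⟩ := hx
  obtain ⟨s, ⟨hs0, hs1⟩, hz1⟩ := h1
  obtain ⟨u, ⟨hu0, hu1⟩, hz2⟩ := h2
  simp only [] at hz1 hz2
  have hEq : (1 - s) • v + s • ((1 - t) • v + t • w)
      = (1 - u) • ((1 - t) • v + t • w) + u • w := by rw [hz1, hz2]
  have key : (s * t - (t + u * (1 - t))) • (w - v) = 0 := by
    linear_combination (norm := module) hEq
  rcases smul_eq_zero.mp key with hc | hwv
  · have h3 : s * t ≤ t := by nlinarith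
    have h4 : t ≤ t + u * (1 - t) := by nlinarith
    have hst : s * t = t := by linarith [sub_eq_zero.mp (by linarith [hc] : s * t - (t + u * (1 - t)) = 0)]
    have hzx : z - ((1 - t) • v + t • w) = (s * t - t) • (w - v) := by
      rw [← hz1]; module
    rw [hst, sub_self, zero_smul, sub_eq_zero] at hzx
    exact hzx
  · have hvw : w = v := sub_eq_zero.mp hwv
    subst hvw
    rw [← hz1]; module

/-- If `a, b, c` are affinely independent points of the Euclidean plane spanning the
triangle `T = convexHull ℝ {a,b,c}`, `v, w` lie outside `T`, and some point of the closed
segment `[v,w]` lies in the interior of `T`, then `[v,w]` meets the frontier of `T` in at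
least two points. -/
theorem segment_frontier_two_points_of_outside_outside
    (a b c v w x : EuclideanSpace ℝ (Fin 2)) (h : AffineIndependent ℝ ![a, b, c])
    (hv : v ∉ convexHull ℝ ({a, b, c} : Set (EuclideanSpace ℝ (Fin 2))))
    (hw : w ∉ convexHull ℝ ({a, b, c} : Set (EuclideanSpace ℝ (Fin 2))))
    (hx : x ∈ segment ℝ v w)
    (hxi : x ∈ interior (convexHull ℝ ({a, b, c} : Set (EuclideanSpace ℝ (Fin 2))))) :
    ∃ z₁ z₂ : EuclideanSpace ℝ (Fin 2), z₁ ≠ z₂ ∧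
      z₁ ∈ segment ℝ v w ∧
      z₁ ∈ frontier (convexHull ℝ ({a, b, c} : Set (EuclideanSpace ℝ (Fin 2)))) ∧
      z₂ ∈ segment ℝ v w ∧
      z₂ ∈ frontier (convexHull ℝ ({a, b, c} : Set (EuclideanSpace ℝ (Fin 2)))) := by
  set T := convexHull ℝ ({a, b, c} : Set (EuclideanSpace ℝ (Fin 2))) with hT
  have hxT : x ∈ T := interior_subset hxi
  have h1 := my_inter_frontier_nonempty (convex_segment v x).isPreconnected
    ⟨x, right_mem_segment ℝ v x, hxT⟩ ⟨v, left_mem_segment ℝ v x, hv⟩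
  have h2 := my_inter_frontier_nonempty (convex_segment x w).isPreconnected
    ⟨x, left_mem_segment ℝ x w, hxT⟩ ⟨w, right_mem_segment ℝ x w, hw⟩
  obtain ⟨z₁, hz₁s, hz₁f⟩ := h1
  obtain ⟨z₂, hz₂s, hz₂f⟩ := h2
  have hsub1 : segment ℝ v x ⊆ segment ℝ v w :=
    (convex_segment v w).segment_subset (left_mem_segment ℝ v w) hx
  have hsub2 : segment ℝ x w ⊆ segment ℝ v w :=
    (convex_segment v w).segment_subset hx (right_mem_segment ℝ v w)
  refine ⟨z₁, z₂, ?_, hsub1 hz₁s, hz₁f, hsub2 hz₂s, hz₂f⟩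
  intro hzz
  subst hzz
  have : z₁ = x := my_seg_inter hx hz₁s hz₂s
  rw [this] at hz₁f
  exact hz₁f.2 hxi
end

section
/- Let p₁, p₂, p₃, p₄, m be five points of the Euclidean plane in general position (pairwise distinct, no three collinear), and consider the six segments of the θ-configuration consisting of the quadrilateral cycle [p₁,p₂], [p₂,p₃], [p₃,p₄], [p₄,p₁] together with the two-segment path [p₁,m], [m,p₃]. Then the number of crossing pairs — unordered pairs of two of these six segments that share no endpoint and have nonempty intersection — is at most 4. -/
/-- Key geometric lemma: for four points with `a, b, c` not collinear and `b ≠ d`,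
the segments `[a,b]` and `[c,d]` cannot meet if `[b,c]` and `[d,a]` also meet
(opposite sides of a generic quadrilateral cannot both cross). -/
lemma key_cross {E : Type*} [NormedAddCommGroup E] [NormedSpace ℝ E]
    (a b c d : E) (hc : ¬Collinear ℝ ({a, b, c} : Set E)) (hbd : b ≠ d)
    (h1 : (segment ℝ a b ∩ segment ℝ c d).Nonempty)
    (h2 : (segment ℝ b c ∩ segment ℝ d a).Nonempty) : False := by
  obtain ⟨x, hxab, hxcd⟩ := h1
  obtain ⟨y, hybc, hyda⟩ := h2
  obtain ⟨s, s', hs, hs', hss, hxe⟩ := hxab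
  obtain ⟨t, t', ht, ht', htt, hxe'⟩ := hxcd
  obtain ⟨u, u', hu, hu', huu, hye⟩ := hybc
  obtain ⟨v, v', hv, hv', hvv, hye'⟩ := hyda
  have e1 : s • a + s' • b = t • c + t' • d := hxe.trans hxe'.symm
  have e2 : u • b + u' • c = v • d + v' • a := hye.trans hye'.symm
  have hai : AffineIndependent ℝ ![a, b, c] :=
    (affineIndependent_iff_not_collinear_set).mpr hc
  rw [affineIndependent_iff] at hai
  set w : Fin 3 → ℝ := ![v * s + t' * v', v * s' - t' * u, -(v * t + t' * u')] with hw
  have hw0 : ∑ i ∈ Finset.univ, w i = 0 := by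
    simp [hw, Fin.sum_univ_three]
    linear_combination v * hss - v * htt - t' * huu + t' * hvv
  have hwv : ∑ i ∈ Finset.univ, w i • ![a, b, c] i = 0 := by
    simp [hw, Fin.sum_univ_three]
    linear_combination (norm := module) v • e1 - t' • e2
  have hz := hai Finset.univ w hw0 hwv
  have hz0 : v * s + t' * v' = 0 := by simpa [hw] using hz 0 (by simp)
  have hz2 : v * t + t' * u' = 0 := by
    have := hz 2 (by simp)
    simp [hw] at this
    linarith
  rcases eq_or_ne v 0 with hv0 | hv0
  · -- then y = a and a lies on the line through b and c: contradiction
    have hv1 : v' = 1 := by linarith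
    have hya : y = a := by
      rw [← hye', hv0, hv1]; simp
    have : a = AffineMap.lineMap b c u' := by
      rw [AffineMap.lineMap_apply_module, ← hya, ← hye]
      have : u = 1 - u' := by linarith
      rw [this]
    have hmem : a ∈ affineSpan ℝ ({b, c} : Set E) := by
      rw [this]; exact AffineMap.lineMap_mem_affineSpan_pair _ _ _
    exact hc (collinear_insert_of_mem_affineSpan_pair hmem)
  · -- then x = b and x = d, contradicting b ≠ d
    have hs0 : s = 0 := by
      have h1 : 0 ≤ v * s := mul_nonneg hv hs
      have h2 : 0 ≤ t' * v' := mul_nonneg ht' hv'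
      have : v * s = 0 := by linarith
      exact (mul_eq_zero.mp this).resolve_left hv0
    have ht0 : t = 0 := by
      have h1 : 0 ≤ v * t := mul_nonneg hv ht
      have h2 : 0 ≤ t' * u' := mul_nonneg ht' hu'
      have : v * t = 0 := by linarith
      exact (mul_eq_zero.mp this).resolve_left hv0
    have hs1 : s' = 1 := by linarith
    have ht1 : t' = 1 := by linarith
    have hb : x = b := by rw [← hxe, hs0, hs1]; simp
    have hd : x = d := by rw [← hxe', ht0, ht1]; simp
    exact hbd (hb ▸ hd ▸ rfl)

/-- For five points `p₁, p₂, p₃, p₄, m` in general position in the plane, the six segments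
of the θ-configuration (quadrilateral cycle `[p₁,p₂], [p₂,p₃], [p₃,p₄], [p₄,p₁]` together
with the path `[p₁,m], [m,p₃]`) have at most 4 crossing pairs: unordered pairs of segments
sharing no endpoint and having nonempty intersection. -/
theorem theta_six_sticks_crossings_le_four
    (p₁ p₂ p₃ p₄ m : EuclideanSpace ℝ (Fin 2))
    (hdist : ∀ i j : Fin 5, i ≠ j → ![p₁, p₂, p₃, p₄, m] i ≠ ![p₁, p₂, p₃, p₄, m] j)
    (hcol : ∀ i j k : Fin 5, i ≠ j → j ≠ k → i ≠ k →
      ¬ Collinear ℝ ({![p₁, p₂, p₃, p₄, m] i, ![p₁, p₂, p₃, p₄, m] j,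
        ![p₁, p₂, p₃, p₄, m] k} : Set (EuclideanSpace ℝ (Fin 2)))) :
    ({p : Fin 6 × Fin 6 | p.1 < p.2 ∧
        ¬ SharesEndpoint (![(p₁, p₂), (p₂, p₃), (p₃, p₄), (p₄, p₁), (p₁, m), (m, p₃)] p.1)
          (![(p₁, p₂), (p₂, p₃), (p₃, p₄), (p₄, p₁), (p₁, m), (m, p₃)] p.2) ∧
        (segOf (![(p₁, p₂), (p₂, p₃), (p₃, p₄), (p₄, p₁), (p₁, m), (m, p₃)] p.1) ∩
          segOf (![(p₁, p₂), (p₂, p₃), (p₃, p₄), (p₄, p₁), (p₁, m), (m, p₃)] p.2)).Nonempty}).ncard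
      ≤ 4 := by
  set Q : Set (Fin 6 × Fin 6) := {p : Fin 6 × Fin 6 | p.1 < p.2 ∧
      ¬ SharesEndpoint (![(p₁, p₂), (p₂, p₃), (p₃, p₄), (p₄, p₁), (p₁, m), (m, p₃)] p.1)
        (![(p₁, p₂), (p₂, p₃), (p₃, p₄), (p₄, p₁), (p₁, m), (m, p₃)] p.2) ∧
      (segOf (![(p₁, p₂), (p₂, p₃), (p₃, p₄), (p₄, p₁), (p₁, m), (m, p₃)] p.1) ∩
        segOf (![(p₁, p₂), (p₂, p₃), (p₃, p₄), (p₄, p₁), (p₁, m), (m, p₃)] p.2)).Nonempty}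
    with hQdef
  set T : Finset (Fin 6 × Fin 6) :=
    {(0, 2), (0, 5), (1, 3), (1, 4), (2, 4), (3, 5)} with hT
  have hc123 : ¬ Collinear ℝ ({p₁, p₂, p₃} : Set (EuclideanSpace ℝ (Fin 2))) := by
    have := hcol 0 1 2 (by decide) (by decide) (by decide)
    simpa using this
  have hd24 : p₂ ≠ p₄ := by
    have := hdist 1 3 (by decide); simpa using this
  have hd2m : p₂ ≠ m := by
    have := hdist 1 4 (by decide); simpa using this
  -- the two exclusions coming from the geometric lemma
  have hA : ((0 : Fin 6), (2 : Fin 6)) ∉ Q ∨ ((1 : Fin 6), (3 : Fin 6)) ∉ Q := by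
    by_contra h
    push_neg at h
    obtain ⟨h1, h2⟩ := h
    have h1' : (segment ℝ p₁ p₂ ∩ segment ℝ p₃ p₄).Nonempty := h1.2.2
    have h2' : (segment ℝ p₂ p₃ ∩ segment ℝ p₄ p₁).Nonempty := h2.2.2
    exact key_cross p₁ p₂ p₃ p₄ hc123 hd24 h1' h2'
  have hB : ((0 : Fin 6), (5 : Fin 6)) ∉ Q ∨ ((1 : Fin 6), (4 : Fin 6)) ∉ Q := by
    by_contra h
    push_neg at h
    obtain ⟨h1, h2⟩ := h
    have h1' : (segment ℝ p₁ p₂ ∩ segment ℝ m p₃).Nonempty := h1.2.2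
    have h2' : (segment ℝ p₂ p₃ ∩ segment ℝ p₁ m).Nonempty := h2.2.2
    rw [segment_symm (𝕜 := ℝ) (x := m) (y := p₃)] at h1'
    rw [segment_symm (𝕜 := ℝ) (x := p₁) (y := m)] at h2'
    exact key_cross p₁ p₂ p₃ m hc123 hd2m h1' h2'
  -- Q is contained in the six candidate (non-adjacent) pairs
  have hsubT : Q ⊆ (↑T : Set (Fin 6 × Fin 6)) := by
    rintro ⟨i, j⟩ ⟨hlt, hnsh, -⟩
    fin_cases i <;> fin_cases j <;>
      first
        | exact absurd hlt (by decide)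
        | decide
        | exact absurd (show SharesEndpoint _ _ by unfold SharesEndpoint; tauto) hnsh
  -- counting argument
  have count : ∀ e₁ e₂ : Fin 6 × Fin 6, e₁ ∉ Q → e₂ ∉ Q → e₁ ≠ e₂ →
      e₁ ∈ T → e₂ ∈ T → Q.ncard ≤ 4 := by
    intro e₁ e₂ h₁ h₂ hne he₁ he₂
    have hsub : Q ⊆ (↑((T.erase e₁).erase e₂) : Set (Fin 6 × Fin 6)) := by
      intro x hx
      refine Finset.mem_coe.mpr (Finset.mem_erase.mpr ⟨?_, Finset.mem_erase.mpr ⟨?_, ?_⟩⟩)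
      · rintro rfl; exact h₂ hx
      · rintro rfl; exact h₁ hx
      · exact hsubT hx
    have hcard : ((T.erase e₁).erase e₂).card = 4 := by
      have hm : e₂ ∈ T.erase e₁ := Finset.mem_erase.mpr ⟨hne.symm, he₂⟩
      rw [Finset.card_erase_of_mem hm, Finset.card_erase_of_mem he₁]
      have : T.card = 6 := by rw [hT]; decide
      rw [this]
    calc Q.ncard ≤ (↑((T.erase e₁).erase e₂) : Set (Fin 6 × Fin 6)).ncard :=
          Set.ncard_le_ncard hsub (Finset.finite_toSet _)
      _ = ((T.erase e₁).erase e₂).card := Set.ncard_coe_finset _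
      _ ≤ 4 := hcard.le
  rcases hA with hA | hA <;> rcases hB with hB | hB
  · exact count _ _ hA hB (by decide) (by decide) (by decide)
  · exact count _ _ hA hB (by decide) (by decide) (by decide)
  · exact count _ _ hA hB (by decide) (by decide) (by decide)
  · exact count _ _ hA hB (by decide) (by decide) (by decide)
end

section
/- There exist five points x, a, b, c, d of the Euclidean plane in general position (pairwise distinct, no three collinear) such that the six segments of the bouquet configuration consisting of the two triangle loops [x,a], [a,b], [b,x] and [x,c], [c,d], [d,x] have exactly 3 crossing pairs, i.e., exactly 3 unordered pairs of segments that share no endpoint and have nonempty intersection. -/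
/-!
Take `x = (0,0)`, `a = (0,1)`, `b = (2,1)`, `c = (1,0)`, `d = (1,2)`; the two triangles are mirror
images of each other in the diagonal. Of the five pairs of sticks without a common endpoint,
`[a,b]` crosses `[c,d]` and `[d,x]`, and `[b,x]` crosses `[c,d]`, while the vertical line through
`(1/2,0)` separates `[x,a]` from `[c,d]` and the horizontal one through `(0,1/2)` separates `[x,c]`
from `[a,b]`.
-/

open Function Set

theorem injective_of_forall_not_collinear {k V P ι : Type*} [DivisionRing k] [AddCommGroup V]
    [Module k V] [AddTorsor V P] {p : ι → P} (hι : 3 ≤ ENat.card ι)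
    (h : ∀ i j l, i ≠ j → j ≠ l → i ≠ l → ¬ Collinear k ({p i, p j, p l} : Set P)) :
    Injective p := by
  intro i j hij
  by_contra hne
  obtain ⟨l, hli, hlj⟩ := ENat.exists_ne_ne_of_three_le hι i j
  refine h i j l hne hlj.symm hli.symm ?_
  rw [hij, insert_idem]
  exact collinear_pair k _ _

theorem not_collinear_of_cross_ne_zero {p q r : EuclideanSpace ℝ (Fin 2)}
    (h : (q 0 - p 0) * (r 1 - p 1) - (q 1 - p 1) * (r 0 - p 0) ≠ 0) :
    ¬ Collinear ℝ ({p, q, r} : Set (EuclideanSpace ℝ (Fin 2))) := by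
  intro hc
  obtain ⟨v, hv⟩ := (collinear_iff_of_mem (mem_insert p _)).1 hc
  obtain ⟨s, rfl⟩ := hv q (by simp)
  obtain ⟨t, rfl⟩ := hv r (by simp)
  apply h
  simp only [vadd_eq_add, PiLp.add_apply, PiLp.smul_apply, smul_eq_mul]
  ring

theorem mem_segment_of_forall_apply {ι : Type*} {p q z : EuclideanSpace ℝ ι} (t : ℝ)
    (ht : t ∈ Icc (0 : ℝ) 1) (h : ∀ i, z i = (1 - t) * p i + t * q i) :
    z ∈ segment ℝ p q :=
  ⟨1 - t, t, by linarith [ht.2], ht.1, by ring, by ext i; simp [h]⟩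

theorem disjoint_segment_of_separated {𝕜 E : Type*} [Field 𝕜] [LinearOrder 𝕜]
    [IsStrictOrderedRing 𝕜] [AddCommGroup E] [Module 𝕜 E] (f : E →ₗ[𝕜] 𝕜) {c : 𝕜}
    {p q r s : E} (hp : f p ≤ c) (hq : f q ≤ c) (hr : c < f r) (hs : c < f s) :
    Disjoint (segment 𝕜 p q) (segment 𝕜 r s) :=
  disjoint_left.2 fun _ hpq hrs =>
    ((convex_halfSpace_le f.isLinear c).segment_subset hp hq hpq).not_gt
      ((convex_halfSpace_gt f.isLinear c).segment_subset hr hs hrs)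

theorem sharesEndpoint_iff_of_injective {ι : Type*} {P : ι → EuclideanSpace ℝ (Fin 2)}
    (hP : Injective P) (e f : ι × ι) :
    SharesEndpoint (P e.1, P e.2) (P f.1, P f.2) ↔
      e.1 = f.1 ∨ e.1 = f.2 ∨ e.2 = f.1 ∨ e.2 = f.2 := by
  simp only [SharesEndpoint, hP.eq_iff]

theorem bouquet_crossings_ncard_eq_three {x a b c d : EuclideanSpace ℝ (Fin 2)}
    (hinj : Injective ![x, a, b, c, d])
    (hab_cd : (segOf (a, b) ∩ segOf (c, d)).Nonempty)
    (hab_dx : (segOf (a, b) ∩ segOf (d, x)).Nonempty)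
    (hbx_cd : (segOf (b, x) ∩ segOf (c, d)).Nonempty)
    (hxa_cd : Disjoint (segOf (x, a)) (segOf (c, d)))
    (hab_xc : Disjoint (segOf (a, b)) (segOf (x, c))) :
    {p : Fin 6 × Fin 6 | p.1 < p.2 ∧
        ¬ SharesEndpoint (![(x, a), (a, b), (b, x), (x, c), (c, d), (d, x)] p.1)
          (![(x, a), (a, b), (b, x), (x, c), (c, d), (d, x)] p.2) ∧
        (segOf (![(x, a), (a, b), (b, x), (x, c), (c, d), (d, x)] p.1) ∩
          segOf (![(x, a), (a, b), (b, x), (x, c), (c, d), (d, x)] p.2)).Nonempty}.ncard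
      = 3 := by
  set P := ![x, a, b, c, d]
  -- sticks as index pairs into `P`, so that sharing an endpoint becomes decidable
  set E : Fin 6 → Fin 5 × Fin 5 := ![(0, 1), (1, 2), (2, 0), (0, 3), (3, 4), (4, 0)]
  have hseg :
      ![(x, a), (a, b), (b, x), (x, c), (c, d), (d, x)] = fun k ↦ (P (E k).1, P (E k).2) := by
    funext k; fin_cases k <;> rfl
  rw [disjoint_iff_inter_eq_empty] at hxa_cd hab_xc
  have hcross : {p : Fin 6 × Fin 6 | p.1 < p.2 ∧
      ¬ SharesEndpoint (P (E p.1).1, P (E p.1).2) (P (E p.2).1, P (E p.2).2) ∧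
      (segOf (P (E p.1).1, P (E p.1).2) ∩ segOf (P (E p.2).1, P (E p.2).2)).Nonempty} =
      {(1, 4), (1, 5), (2, 4)} := by
    simp only [sharesEndpoint_iff_of_injective hinj]
    ext ⟨i, j⟩
    fin_cases i <;> fin_cases j <;> simp [P, E, hab_cd, hab_dx, hbx_cd, hxa_cd, hab_xc]
  rw [hseg, hcross]
  simp

/-- There exist five points `x, a, b, c, d` in general position in the plane such that the
six segments of the bouquet configuration (two triangle loops `[x,a], [a,b], [b,x]` and
`[x,c], [c,d], [d,x]`) have exactly 3 crossing pairs. -/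
theorem exists_bouquet_six_sticks_three_crossings :
    ∃ x a b c d : EuclideanSpace ℝ (Fin 2),
      (∀ i j : Fin 5, i ≠ j → ![x, a, b, c, d] i ≠ ![x, a, b, c, d] j) ∧
      (∀ i j k : Fin 5, i ≠ j → j ≠ k → i ≠ k →
        ¬ Collinear ℝ ({![x, a, b, c, d] i, ![x, a, b, c, d] j,
          ![x, a, b, c, d] k} : Set (EuclideanSpace ℝ (Fin 2)))) ∧
      ({p : Fin 6 × Fin 6 | p.1 < p.2 ∧
        ¬ SharesEndpoint (![(x, a), (a, b), (b, x), (x, c), (c, d), (d, x)] p.1)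
          (![(x, a), (a, b), (b, x), (x, c), (c, d), (d, x)] p.2) ∧
        (segOf (![(x, a), (a, b), (b, x), (x, c), (c, d), (d, x)] p.1) ∩
          segOf (![(x, a), (a, b), (b, x), (x, c), (c, d), (d, x)] p.2)).Nonempty}).ncard
        = 3 := by
  refine ⟨!₂[0, 0], !₂[0, 1], !₂[2, 1], !₂[1, 0], !₂[1, 2], ?_⟩
  set P : Fin 5 → EuclideanSpace ℝ (Fin 2) :=
    ![!₂[0, 0], !₂[0, 1], !₂[2, 1], !₂[1, 0], !₂[1, 2]] with hP
  have hgen : ∀ i j k, i ≠ j → j ≠ k → i ≠ k →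
      ¬ Collinear ℝ ({P i, P j, P k} : Set (EuclideanSpace ℝ (Fin 2))) := by
    intro i j k hij hjk hik
    fin_cases i <;> fin_cases j <;> fin_cases k <;> first
      | exact absurd rfl hij | exact absurd rfl hjk | exact absurd rfl hik
      | exact not_collinear_of_cross_ne_zero (by norm_num [hP])
  have hinj : Injective P := injective_of_forall_not_collinear (by norm_num) hgen
  refine ⟨fun i j => hinj.ne, hgen, bouquet_crossings_ncard_eq_three hinj
    ⟨!₂[1, 1], mem_segment_of_forall_apply (1 / 2) ?_ ?_,
      mem_segment_of_forall_apply (1 / 2) ?_ ?_⟩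
    ⟨!₂[1 / 2, 1], mem_segment_of_forall_apply (1 / 4) ?_ ?_,
      mem_segment_of_forall_apply (1 / 2) ?_ ?_⟩
    ⟨!₂[1, 1 / 2], mem_segment_of_forall_apply (1 / 2) ?_ ?_,
      mem_segment_of_forall_apply (1 / 4) ?_ ?_⟩
    (disjoint_segment_of_separated (EuclideanSpace.proj 0).toLinearMap (c := 1 / 2) ?_ ?_ ?_ ?_)
    (disjoint_segment_of_separated (EuclideanSpace.proj 1).toLinearMap (c := 1 / 2)
      ?_ ?_ ?_ ?_).symm⟩
  all_goals norm_num [Fin.forall_fin_two]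
end
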